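/- arXiv:1701.03341 — 2 statements merged into one kernel-verified Lean document; each statement's English description precedes it below -/
import Mathlib

section
/- If (ψ₁,c₁) and (ψ₂,c₂) are both solutions of the differential system (D), then c₁ = c₂. -/
open MeasureTheory Filter Set Topology Function ProbabilityTheory

/-!
Both solutions have `ψ'' > 0`, slopes increasing from 0 to 1, and `c > 0`. Suppose `c₂ < c₁`.
Let `θ s` be the point where `ψ₂` has the slope `ψ₁' s`, and `w s = ψ₁* p - ψ₂* p` the difference
of the Legendre transforms at `p = ψ₁' s`; then `w' = ψ₁'' (id - θ)`. Wherever `w ≤ 0`,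
monotonicity of `H'` and the two equations give `c₁ N ≤ c₂ (N ∘ θ) θ'`. Integrating this over a
half-line `[s, ∞)` on which `w ≤ 0` forces `θ s < s`, i.e. `w' s > 0`, and symmetrically on
`(-∞, s]`; so if `w` took a negative value it would have a negative local minimum `s`. There
`θ s = s` and `θ' s ≤ 1`, and the strict form of the inequality gives `c₁ < c₂`. Hence `w ≥ 0`,
i.e. `ψ₁* ≥ ψ₂*`, so `ψ₁ ≤ ψ₂`; the normalization `∫ ψ N = 0` then forces `ψ₁ = ψ₂` and `c₁ = c₂`.
-/

theorem StrictMono.continuousAt_invFun {g : ℝ → ℝ} (hg : StrictMono g) {y : ℝ}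
    (hy : range g ∈ 𝓝 y) : ContinuousAt (invFun g) y := by
  have hinv : ∀ z ∈ range g, g (invFun g z) = z := fun z hz => invFun_eq hz
  have hmono : StrictMonoOn (invFun g) (range g) := fun a ha b hb hab =>
    hg.lt_iff_lt.mp (by rwa [hinv a ha, hinv b hb])
  have himage : invFun g '' range g = univ :=
    eq_univ_of_forall fun s => ⟨g s, mem_range_self s, leftInverse_invFun hg.injective s⟩
  exact hmono.continuousAt_of_image_mem_nhds hy (by rw [himage]; exact univ_mem)

theorem eq_of_deriv_eq_zero_of_mem_open {g : ℝ → ℝ} (hg : Differentiable ℝ g) {U : Set ℝ}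
    (hU : IsOpen U) (h : ∀ s, g s ∈ U → deriv g s = 0) {a : ℝ} (ha : g a ∈ U) (s : ℝ) :
    g s = g a := by
  have hclopen : IsClopen {s | g s = g a} := by
    refine ⟨isClosed_eq hg.continuous continuous_const, isOpen_iff_forall_mem_open.2 ?_⟩
    intro t ht
    obtain ⟨r, hr, hball⟩ :=
      Metric.isOpen_iff.1 (hU.preimage hg.continuous) t (by rwa [mem_preimage, ht])
    refine ⟨Metric.ball t r, fun u hu => ?_, Metric.isOpen_ball, Metric.mem_ball_self hr⟩
    exact (Metric.isOpen_ball.is_const_of_deriv_eq_zero (convex_ball t r).isPreconnected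
      hg.differentiableOn (fun v hv => h v (hball hv)) hu (Metric.mem_ball_self hr)).trans ht
  exact eq_univ_iff_forall.1 (hclopen.eq_univ ⟨a, rfl⟩) s

theorem Monotone.add_deriv_mul_sub_le {φ : ℝ → ℝ} (hmono : Monotone (deriv φ))
    (hd : Differentiable ℝ φ) (x y : ℝ) : φ x + deriv φ x * (y - x) ≤ φ y := by
  have hconv := hmono.convexOn_univ_of_deriv hd
  rcases lt_trichotomy x y with hxy | rfl | hxy
  · have := hconv.deriv_le_slope (mem_univ x) (mem_univ y) hxy (hd x)
    rw [slope_def_field, le_div_iff₀ (sub_pos.2 hxy)] at this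
    linarith
  · simp
  · have := hconv.slope_le_deriv (mem_univ y) (mem_univ x) hxy (hd x)
    rw [slope_def_field, div_le_iff₀ (sub_pos.2 hxy)] at this
    linarith

theorem setIntegral_pos_of_forall_pos {N : ℝ → ℝ} (hN : ∀ x, 0 < N x) {S : Set ℝ}
    (hint : IntegrableOn N S) (hS : volume S ≠ 0) : 0 < ∫ x in S, N x := by
  rw [setIntegral_pos_iff_support_of_nonneg_ae (ae_of_all _ fun x => (hN x).le) hint,
    support_eq_univ fun x => (hN x).ne', univ_inter]
  exact pos_iff_ne_zero.2 hS

theorem eq_of_le_of_integral_mul_eq {ψ₁ ψ₂ N : ℝ → ℝ} (hle : ∀ s, ψ₁ s ≤ ψ₂ s)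
    (hψ₁ : Continuous ψ₁) (hψ₂ : Continuous ψ₂) (hN : Continuous N) (hNpos : ∀ s, 0 < N s)
    (hint₁ : Integrable fun z => ψ₁ z * N z) (hint₂ : Integrable fun z => ψ₂ z * N z)
    (heq : ∫ z, ψ₁ z * N z = ∫ z, ψ₂ z * N z) : ψ₁ = ψ₂ := by
  have hnonneg : 0 ≤ fun z => ψ₂ z * N z - ψ₁ z * N z := fun z =>
    sub_nonneg.2 (mul_le_mul_of_nonneg_right (hle z) (hNpos z).le)
  have hzero : ∫ z, (ψ₂ z * N z - ψ₁ z * N z) = 0 := by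
    rw [integral_sub hint₂ hint₁, heq, sub_self]
  have hae := (integral_eq_zero_iff_of_nonneg hnonneg (hint₂.sub hint₁)).1 hzero
  have hdiff := (Continuous.ae_eq_iff_eq volume ((hψ₂.mul hN).sub (hψ₁.mul hN))
    continuous_zero).1 hae
  funext z
  exact (mul_right_cancel₀ (hNpos z).ne' (sub_eq_zero.1 (congrFun hdiff z))).symm

theorem IsLocalMin.le_one_of_hasDerivAt_mul_sub {w θ a : ℝ → ℝ} {θ' s : ℝ}
    (hw : ∀ t, HasDerivAt w (a t * (t - θ t)) t) (ha : ∀ t, 0 < a t)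
    (hθ : HasDerivAt θ θ' s) (hθs : θ s = s) (hmin : IsLocalMin w s) : θ' ≤ 1 := by
  by_contra! hθ'
  have hφ : HasDerivAt (fun t => t - θ t) (1 - θ') s := (hasDerivAt_id' s).sub hθ
  have hsign := eventually_nhdsWithin_sign_eq_of_deriv_neg (f := fun t => t - θ t) (x₀ := s)
    (by rw [hφ.deriv]; linarith) (by simp [hθs])
  have hleft : ∀ᶠ t in 𝓝[<] s, 0 < a t * (t - θ t) ∧ w s ≤ w t := by
    filter_upwards [nhdsWithin_le_nhds hsign, nhdsWithin_le_nhds hmin, self_mem_nhdsWithin]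
      with t ht hmt hts
    exact ⟨mul_pos (ha t) (sign_eq_one_iff.1 (ht.trans (sign_pos (sub_pos.2 hts)))), hmt⟩
  obtain ⟨b, hb, hIoo⟩ := mem_nhdsLT_iff_exists_Ioo_subset.1 hleft
  have hmono : StrictMonoOn w (Icc b s) := by
    refine strictMonoOn_of_deriv_pos (convex_Icc b s)
      (fun t _ => (hw t).continuousAt.continuousWithinAt) fun t ht => ?_
    rw [interior_Icc] at ht
    rw [(hw t).deriv]
    exact (hIoo ht).1
  have hm : (b + s) / 2 ∈ Ioo b s := ⟨by linarith [mem_Iio.1 hb], by linarith [mem_Iio.1 hb]⟩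
  have := hmono (Ioo_subset_Icc_self hm) (right_mem_Icc.2 (le_of_lt hb)) hm.2
  linarith [(hIoo hm).2]

theorem exists_gt_of_neg {w w' : ℝ → ℝ} (hw : ∀ t, HasDerivAt w (w' t) t)
    (hray : ∀ t, (∀ u, t ≤ u → w u ≤ 0) → 0 < w' t) {s : ℝ} (hs : w s < 0) :
    ∃ q, s < q ∧ w s < w q := by
  by_cases h : ∃ q, s ≤ q ∧ 0 < w q
  · obtain ⟨q, hsq, hq⟩ := h
    exact ⟨q, hsq.lt_of_ne (by rintro rfl; linarith), by linarith⟩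
  push Not at h
  have hmono : StrictMonoOn w (Ici s) := by
    refine strictMonoOn_of_deriv_pos (convex_Ici s)
      (fun t _ => (hw t).continuousAt.continuousWithinAt) fun t ht => ?_
    rw [interior_Ici] at ht
    rw [(hw t).deriv]
    exact hray t fun u hu => h u ((le_of_lt ht).trans hu)
  exact ⟨s + 1, by linarith, hmono self_mem_Ici (by simp) (by linarith)⟩

theorem exists_lt_of_neg {w w' : ℝ → ℝ} (hw : ∀ t, HasDerivAt w (w' t) t)
    (hray : ∀ t, (∀ u, u ≤ t → w u ≤ 0) → w' t < 0) {s : ℝ} (hs : w s < 0) :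
    ∃ p, p < s ∧ w s < w p := by
  have hw_neg : ∀ t, HasDerivAt (fun t => w (-t)) (-w' (-t)) t := fun t => by
    simpa [Function.comp_def] using HasDerivAt.scomp (𝕜 := ℝ) t (hw (-t)) (hasDerivAt_neg t)
  obtain ⟨q, hq, hwq⟩ := exists_gt_of_neg hw_neg
    (fun t h => neg_pos.2 (hray (-t) fun u hu => by simpa using h (-u) (by linarith)))
    (s := -s) (by simpa using hs)
  exact ⟨-q, by linarith, by simpa using hwq⟩

theorem nonneg_of_isLocalMin_nonneg {w w' : ℝ → ℝ} (hw : ∀ t, HasDerivAt w (w' t) t)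
    (hright : ∀ t, (∀ u, t ≤ u → w u ≤ 0) → 0 < w' t)
    (hleft : ∀ t, (∀ u, u ≤ t → w u ≤ 0) → w' t < 0)
    (hmin : ∀ t, IsLocalMin w t → 0 ≤ w t) (s : ℝ) : 0 ≤ w s := by
  by_contra! hs
  obtain ⟨p, hps, hwp⟩ := exists_lt_of_neg hw hleft hs
  obtain ⟨q, hsq, hwq⟩ := exists_gt_of_neg hw hright hs
  obtain ⟨m, hm, hmin_m⟩ := isCompact_Icc.exists_isMinOn (nonempty_Icc.2 (hps.trans hsq).le)
    fun t _ => (hw t).continuousAt.continuousWithinAt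
  have hms : w m ≤ w s := hmin_m ⟨hps.le, hsq.le⟩
  have hpm : p < m := hm.1.lt_of_ne (by rintro rfl; linarith)
  have hmq : m < q := hm.2.lt_of_ne (by rintro h; subst h; linarith)
  linarith [hmin m (hmin_m.isLocalMin (Icc_mem_nhds hpm hmq))]

/-- Conditions (1)–(3) of the system (D); the normalization (4) is kept separate. -/
structure IsSolutionD (f H N ψ : ℝ → ℝ) (c : ℝ) : Prop where
  contDiff : ContDiff ℝ 2 ψ
  ode : ∀ s, f (deriv ψ s) * deriv (deriv ψ) s * deriv H (s * deriv ψ s - ψ s) = c * N s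
  tendsto_atBot : Tendsto (deriv ψ) atBot (𝓝 0)
  tendsto_atTop : Tendsto (deriv ψ) atTop (𝓝 1)

structure IsConvexProfile (ψ : ℝ → ℝ) : Prop where
  contDiff : ContDiff ℝ 2 ψ
  deriv2_pos : ∀ s, 0 < deriv (deriv ψ) s
  tendsto_atBot : Tendsto (deriv ψ) atBot (𝓝 0)
  tendsto_atTop : Tendsto (deriv ψ) atTop (𝓝 1)

variable {f H N ψ ψ₁ ψ₂ : ℝ → ℝ} {c c₁ c₂ : ℝ}

namespace IsConvexProfile

theorem differentiable (hψ : IsConvexProfile ψ) : Differentiable ℝ ψ :=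
  hψ.contDiff.differentiable (by norm_num)

theorem differentiable_deriv (hψ : IsConvexProfile ψ) : Differentiable ℝ (deriv ψ) :=
  hψ.contDiff.differentiable_deriv_two

theorem continuous_deriv2 (hψ : IsConvexProfile ψ) : Continuous (deriv (deriv ψ)) :=
  hψ.contDiff.deriv'.continuous_deriv le_rfl

theorem strictMono_deriv (hψ : IsConvexProfile ψ) : StrictMono (deriv ψ) :=
  strictMono_of_deriv_pos hψ.deriv2_pos

theorem deriv_mem_Ioo (hψ : IsConvexProfile ψ) (s : ℝ) : deriv ψ s ∈ Ioo 0 1 :=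
  ⟨(hψ.strictMono_deriv.monotone.le_of_tendsto hψ.tendsto_atBot (s - 1)).trans_lt
      (hψ.strictMono_deriv (by linarith)),
    (hψ.strictMono_deriv (lt_add_one s)).trans_le
      (hψ.strictMono_deriv.monotone.ge_of_tendsto hψ.tendsto_atTop (s + 1))⟩

theorem range_deriv (hψ : IsConvexProfile ψ) : range (deriv ψ) = Ioo 0 1 :=
  (range_subset_iff.2 hψ.deriv_mem_Ioo).antisymm fun _ hy =>
    mem_range_of_exists_le_of_exists_ge hψ.differentiable_deriv.continuous
      (hψ.tendsto_atBot.eventually (eventually_le_nhds hy.1)).exists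
      (hψ.tendsto_atTop.eventually (eventually_ge_nhds hy.2)).exists

end IsConvexProfile

namespace IsSolutionD

theorem const_ne_zero (h : IsSolutionD f H N ψ c) (hf : ∀ x ∈ Ioo (0 : ℝ) 1, 0 < f x)
    (hH : ∀ x, 0 < deriv H x) : c ≠ 0 := by
  rintro rfl
  have hψ' : Differentiable ℝ (deriv ψ) := h.contDiff.differentiable_deriv_two
  have hflat : ∀ s, deriv ψ s ∈ Ioo (0 : ℝ) 1 → deriv (deriv ψ) s = 0 := fun s hs => by
    simpa [(hf _ hs).ne', (hH _).ne'] using h.ode s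
  obtain ⟨a, ha⟩ : (1 / 2 : ℝ) ∈ range (deriv ψ) :=
    mem_range_of_exists_le_of_exists_ge hψ'.continuous
      (h.tendsto_atBot.eventually (eventually_le_nhds (by norm_num))).exists
      (h.tendsto_atTop.eventually (eventually_ge_nhds (by norm_num))).exists
  have hhalf : ∀ s, deriv ψ s = 1 / 2 := fun s =>
    (eq_of_deriv_eq_zero_of_mem_open hψ' isOpen_Ioo hflat (by rw [ha]; norm_num) s).trans ha
  have := tendsto_nhds_unique (h.tendsto_atTop.congr hhalf) tendsto_const_nhds
  norm_num at this

theorem deriv2_pos (h : IsSolutionD f H N ψ c) (hf : ∀ x ∈ Ioo (0 : ℝ) 1, 0 < f x)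
    (hH : ∀ x, 0 < deriv H x) (hN : ∀ s, 0 < N s) (s : ℝ) : 0 < deriv (deriv ψ) s := by
  have hne : ∀ t, deriv (deriv ψ) t ≠ 0 := fun t ht => by
    have := h.ode t
    rw [ht, mul_zero, zero_mul] at this
    exact mul_ne_zero (h.const_ne_zero hf hH) (hN t).ne' this.symm
  rcases hasDerivWithinAt_forall_lt_or_forall_gt_of_forall_ne convex_univ
      (fun t _ => (h.contDiff.differentiable_deriv_two t).hasDerivAt.hasDerivWithinAt)
      (fun t _ => hne t) with hneg | hpos
  · have hanti : StrictAnti (deriv ψ) := strictAnti_of_deriv_neg fun t => hneg t (mem_univ t)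
    have h₀ : deriv ψ 0 ≤ 0 := ge_of_tendsto h.tendsto_atBot
      (eventually_atBot.2 ⟨0, fun _ ht => hanti.antitone ht⟩)
    linarith [hanti.antitone.le_of_tendsto h.tendsto_atTop 0]
  · exact hpos s (mem_univ s)

theorem isConvexProfile (h : IsSolutionD f H N ψ c) (hf : ∀ x ∈ Ioo (0 : ℝ) 1, 0 < f x)
    (hH : ∀ x, 0 < deriv H x) (hN : ∀ s, 0 < N s) : IsConvexProfile ψ :=
  ⟨h.contDiff, h.deriv2_pos hf hH hN, h.tendsto_atBot, h.tendsto_atTop⟩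

theorem const_pos (h : IsSolutionD f H N ψ c) (hf : ∀ x ∈ Ioo (0 : ℝ) 1, 0 < f x)
    (hH : ∀ x, 0 < deriv H x) (hN : ∀ s, 0 < N s) : 0 < c := by
  have hψ := h.isConvexProfile hf hH hN
  have hlhs := mul_pos (mul_pos (hf _ (hψ.deriv_mem_Ioo 0)) (hψ.deriv2_pos 0))
    (hH (0 * deriv ψ 0 - ψ 0))
  rw [h.ode 0] at hlhs
  exact pos_of_mul_pos_left hlhs (hN 0).le

theorem const_eq (h₁ : IsSolutionD f H N ψ c₁) (h₂ : IsSolutionD f H N ψ c₂) (hN : N 0 ≠ 0) :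
    c₁ = c₂ :=
  mul_right_cancel₀ hN ((h₁.ode 0).symm.trans (h₂.ode 0))

end IsSolutionD

/-- The Legendre transform of `ψ` evaluated at the slope `deriv ψ s`. -/
noncomputable def legendreAt (ψ : ℝ → ℝ) (s : ℝ) : ℝ := s * deriv ψ s - ψ s

theorem hasDerivAt_legendreAt (hψ : ContDiff ℝ 2 ψ) (s : ℝ) :
    HasDerivAt (legendreAt ψ) (s * deriv (deriv ψ) s) s := by
  have h := ((hasDerivAt_id' s).mul (hψ.differentiable_deriv_two s).hasDerivAt).sub
    (hψ.differentiable (by norm_num) s).hasDerivAt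
  exact h.congr_deriv (by ring)

noncomputable def slopeMatch (ψ₁ ψ₂ : ℝ → ℝ) (s : ℝ) : ℝ := invFun (deriv ψ₂) (deriv ψ₁ s)

/-- `ψ₁* p - ψ₂* p` for the Legendre transforms `ψᵢ*`, at `p = deriv ψ₁ s`. -/
noncomputable def legendreGap (ψ₁ ψ₂ : ℝ → ℝ) (s : ℝ) : ℝ :=
  legendreAt ψ₁ s - legendreAt ψ₂ (slopeMatch ψ₁ ψ₂ s)

section SlopeMatch

variable (p₁ : IsConvexProfile ψ₁) (p₂ : IsConvexProfile ψ₂)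
include p₁ p₂

theorem deriv_slopeMatch (s : ℝ) : deriv ψ₂ (slopeMatch ψ₁ ψ₂ s) = deriv ψ₁ s :=
  invFun_eq (p₂.range_deriv ▸ p₁.deriv_mem_Ioo s : deriv ψ₁ s ∈ range (deriv ψ₂))

theorem hasDerivAt_slopeMatch (s : ℝ) :
    HasDerivAt (slopeMatch ψ₁ ψ₂)
      (deriv (deriv ψ₁) s / deriv (deriv ψ₂) (slopeMatch ψ₁ ψ₂ s)) s := by
  have hnhds : range (deriv ψ₂) ∈ 𝓝 (deriv ψ₁ s) :=
    p₂.range_deriv ▸ Ioo_mem_nhds (p₁.deriv_mem_Ioo s).1 (p₁.deriv_mem_Ioo s).2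
  have hinv : HasDerivAt (invFun (deriv ψ₂))
      (deriv (deriv ψ₂) (slopeMatch ψ₁ ψ₂ s))⁻¹ (deriv ψ₁ s) :=
    .of_local_left_inverse (p₂.strictMono_deriv.continuousAt_invFun hnhds)
      (p₂.differentiable_deriv _).hasDerivAt (p₂.deriv2_pos _).ne'
      (eventually_of_mem hnhds fun _ hy => invFun_eq hy)
  rw [div_eq_inv_mul]
  exact hinv.comp s (p₁.differentiable_deriv s).hasDerivAt

theorem continuous_slopeMatch : Continuous (slopeMatch ψ₁ ψ₂) :=
  continuous_iff_continuousAt.2 fun s => (hasDerivAt_slopeMatch p₁ p₂ s).continuousAt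

theorem tendsto_slopeMatch_atTop : Tendsto (slopeMatch ψ₁ ψ₂) atTop atTop := by
  refine tendsto_atTop.2 fun M => ?_
  filter_upwards [p₁.tendsto_atTop.eventually (eventually_gt_nhds (p₂.deriv_mem_Ioo M).2)]
    with s hs
  exact (p₂.strictMono_deriv.lt_iff_lt.1 (by rwa [deriv_slopeMatch p₁ p₂])).le

theorem tendsto_slopeMatch_atBot : Tendsto (slopeMatch ψ₁ ψ₂) atBot atBot := by
  refine tendsto_atBot.2 fun M => ?_
  filter_upwards [p₁.tendsto_atBot.eventually (eventually_lt_nhds (p₂.deriv_mem_Ioo M).1)]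
    with s hs
  exact (p₂.strictMono_deriv.lt_iff_lt.1 (by rwa [deriv_slopeMatch p₁ p₂])).le

theorem hasDerivAt_legendreGap (s : ℝ) :
    HasDerivAt (legendreGap ψ₁ ψ₂) (deriv (deriv ψ₁) s * (s - slopeMatch ψ₁ ψ₂ s)) s := by
  have h₂ := (hasDerivAt_legendreAt p₂.contDiff _).comp s (hasDerivAt_slopeMatch p₁ p₂ s)
  refine ((hasDerivAt_legendreAt p₁.contDiff s).sub h₂).congr_deriv ?_
  field_simp [(p₂.deriv2_pos (slopeMatch ψ₁ ψ₂ s)).ne']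

theorem integral_le_integral_slopeMatch (hN : Continuous N) {s T : ℝ} (hsT : s ≤ T)
    (hpt : ∀ t ∈ Icc s T, c₁ * N t ≤ c₂ * (N (slopeMatch ψ₁ ψ₂ t) *
      (deriv (deriv ψ₁) t / deriv (deriv ψ₂) (slopeMatch ψ₁ ψ₂ t)))) :
    c₁ * ∫ t in s..T, N t ≤ c₂ * ∫ u in slopeMatch ψ₁ ψ₂ s..slopeMatch ψ₁ ψ₂ T, N u := by
  have hθ := continuous_slopeMatch p₁ p₂
  have hθ' : Continuous fun t => deriv (deriv ψ₁) t / deriv (deriv ψ₂) (slopeMatch ψ₁ ψ₂ t) :=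
    p₁.continuous_deriv2.div (p₂.continuous_deriv2.comp hθ) fun t => (p₂.deriv2_pos _).ne'
  rw [← intervalIntegral.integral_comp_mul_deriv (fun t _ => hasDerivAt_slopeMatch p₁ p₂ t)
    hθ'.continuousOn hN, ← intervalIntegral.integral_const_mul,
    ← intervalIntegral.integral_const_mul]
  exact intervalIntegral.integral_mono_on hsT ((continuous_const.mul hN).intervalIntegrable _ _)
    ((continuous_const.mul ((hN.comp hθ).mul hθ')).intervalIntegrable _ _) hpt

theorem le_of_legendreGap_nonneg (hgap : ∀ s, 0 ≤ legendreGap ψ₁ ψ₂ s) (s : ℝ) :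
    ψ₁ s ≤ ψ₂ s := by
  have htangent := p₂.strictMono_deriv.monotone.add_deriv_mul_sub_le p₂.differentiable
    (slopeMatch ψ₁ ψ₂ s) s
  have hgap_s := hgap s
  rw [deriv_slopeMatch p₁ p₂] at htangent
  rw [legendreGap, legendreAt, legendreAt, deriv_slopeMatch p₁ p₂] at hgap_s
  nlinarith

end SlopeMatch

namespace IsSolutionD

variable (h₁ : IsSolutionD f H N ψ₁ c₁) (h₂ : IsSolutionD f H N ψ₂ c₂)
include h₁ h₂

theorem cross_eq {s τ : ℝ} (hslope : deriv ψ₂ τ = deriv ψ₁ s) :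
    c₁ * N s * (deriv (deriv ψ₂) τ * deriv H (legendreAt ψ₂ τ)) =
      c₂ * N τ * (deriv (deriv ψ₁) s * deriv H (legendreAt ψ₁ s)) := by
  rw [← h₁.ode, ← h₂.ode, legendreAt, legendreAt, congrArg f hslope]
  ring

theorem mul_le_of_legendreAt_le (hH : Monotone (deriv H)) (hH₀ : ∀ x, 0 < deriv H x)
    {s τ : ℝ} (hc₂ : 0 ≤ c₂) (hN : 0 ≤ N τ) (hψ₁ : 0 ≤ deriv (deriv ψ₁) s)
    (hψ₂ : 0 < deriv (deriv ψ₂) τ) (hslope : deriv ψ₂ τ = deriv ψ₁ s)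
    (hle : legendreAt ψ₁ s ≤ legendreAt ψ₂ τ) :
    c₁ * N s ≤ c₂ * (N τ * (deriv (deriv ψ₁) s / deriv (deriv ψ₂) τ)) := by
  rw [← mul_assoc, mul_div_assoc', le_div_iff₀ hψ₂]
  refine le_of_mul_le_mul_right ?_ (hH₀ (legendreAt ψ₂ τ))
  calc c₁ * N s * deriv (deriv ψ₂) τ * deriv H (legendreAt ψ₂ τ)
      = c₂ * N τ * (deriv (deriv ψ₁) s * deriv H (legendreAt ψ₁ s)) := by
        rw [mul_assoc, h₁.cross_eq h₂ hslope]
    _ ≤ c₂ * N τ * (deriv (deriv ψ₁) s * deriv H (legendreAt ψ₂ τ)) := by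
        gcongr
        exact hH hle
    _ = c₂ * N τ * deriv (deriv ψ₁) s * deriv H (legendreAt ψ₂ τ) := by ring

theorem mul_lt_of_legendreAt_lt (hH : StrictMono (deriv H)) (hH₀ : ∀ x, 0 < deriv H x)
    {s τ : ℝ} (hc₂ : 0 < c₂) (hN : 0 < N τ) (hψ₁ : 0 < deriv (deriv ψ₁) s)
    (hψ₂ : 0 < deriv (deriv ψ₂) τ) (hslope : deriv ψ₂ τ = deriv ψ₁ s)
    (hlt : legendreAt ψ₁ s < legendreAt ψ₂ τ) :
    c₁ * N s < c₂ * (N τ * (deriv (deriv ψ₁) s / deriv (deriv ψ₂) τ)) := by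
  rw [← mul_assoc, mul_div_assoc', lt_div_iff₀ hψ₂]
  refine lt_of_mul_lt_mul_right ?_ (hH₀ (legendreAt ψ₂ τ)).le
  calc c₁ * N s * deriv (deriv ψ₂) τ * deriv H (legendreAt ψ₂ τ)
      = c₂ * N τ * (deriv (deriv ψ₁) s * deriv H (legendreAt ψ₁ s)) := by
        rw [mul_assoc, h₁.cross_eq h₂ hslope]
    _ < c₂ * N τ * (deriv (deriv ψ₁) s * deriv H (legendreAt ψ₂ τ)) := by
        gcongr
        exact hH hlt
    _ = c₂ * N τ * deriv (deriv ψ₁) s * deriv H (legendreAt ψ₂ τ) := by ring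

section Comparison

variable (hf : ∀ x ∈ Ioo (0 : ℝ) 1, 0 < f x) (hH : StrictMono (deriv H))
  (hH₀ : ∀ x, 0 < deriv H x) (hN : ∀ s, 0 < N s)
include hf hH hH₀ hN

theorem mul_le_of_legendreGap_nonpos {t : ℝ} (ht : legendreGap ψ₁ ψ₂ t ≤ 0) :
    c₁ * N t ≤ c₂ * (N (slopeMatch ψ₁ ψ₂ t) *
      (deriv (deriv ψ₁) t / deriv (deriv ψ₂) (slopeMatch ψ₁ ψ₂ t))) :=
  have p₁ := h₁.isConvexProfile hf hH₀ hN
  have p₂ := h₂.isConvexProfile hf hH₀ hN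
  h₁.mul_le_of_legendreAt_le h₂ hH.monotone hH₀ (h₂.const_pos hf hH₀ hN).le (hN _).le
    (p₁.deriv2_pos t).le (p₂.deriv2_pos _) (deriv_slopeMatch p₁ p₂ t) (sub_nonpos.1 ht)

theorem slopeMatch_lt_of_legendreGap_nonpos (hNcont : Continuous N) (hNint : Integrable N)
    (hc : c₂ < c₁) {s : ℝ} (hgap : ∀ u, s ≤ u → legendreGap ψ₁ ψ₂ u ≤ 0) :
    slopeMatch ψ₁ ψ₂ s < s := by
  have p₁ := h₁.isConvexProfile hf hH₀ hN
  have p₂ := h₂.isConvexProfile hf hH₀ hN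
  have htail : c₁ * ∫ t in Ioi s, N t ≤ c₂ * ∫ u in Ioi (slopeMatch ψ₁ ψ₂ s), N u :=
    le_of_tendsto_of_tendsto
      ((intervalIntegral_tendsto_integral_Ioi s hNint.integrableOn tendsto_id).const_mul c₁)
      ((intervalIntegral_tendsto_integral_Ioi _ hNint.integrableOn
        (tendsto_slopeMatch_atTop p₁ p₂)).const_mul c₂)
      ((eventually_ge_atTop s).mono fun _ hT => integral_le_integral_slopeMatch p₁ p₂ hNcont hT
        fun t ht => h₁.mul_le_of_legendreGap_nonpos h₂ hf hH hH₀ hN (hgap t ht.1))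
  by_contra! hle
  have hmono : ∫ u in Ioi (slopeMatch ψ₁ ψ₂ s), N u ≤ ∫ t in Ioi s, N t :=
    setIntegral_mono_set hNint.integrableOn (ae_of_all _ fun t => (hN t).le)
      (Ioi_subset_Ioi hle).eventuallyLE
  have hpos := setIntegral_pos_of_forall_pos hN hNint.integrableOn (S := Ioi s) (by simp)
  nlinarith [h₂.const_pos hf hH₀ hN]

theorem lt_slopeMatch_of_legendreGap_nonpos (hNcont : Continuous N) (hNint : Integrable N)
    (hc : c₂ < c₁) {s : ℝ} (hgap : ∀ u, u ≤ s → legendreGap ψ₁ ψ₂ u ≤ 0) :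
    s < slopeMatch ψ₁ ψ₂ s := by
  have p₁ := h₁.isConvexProfile hf hH₀ hN
  have p₂ := h₂.isConvexProfile hf hH₀ hN
  have htail : c₁ * ∫ t in Iic s, N t ≤ c₂ * ∫ u in Iic (slopeMatch ψ₁ ψ₂ s), N u :=
    le_of_tendsto_of_tendsto
      ((intervalIntegral_tendsto_integral_Iic s hNint.integrableOn tendsto_id).const_mul c₁)
      ((intervalIntegral_tendsto_integral_Iic _ hNint.integrableOn
        (tendsto_slopeMatch_atBot p₁ p₂)).const_mul c₂)
      ((eventually_le_atBot s).mono fun _ hT => integral_le_integral_slopeMatch p₁ p₂ hNcont hT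
        fun t ht => h₁.mul_le_of_legendreGap_nonpos h₂ hf hH hH₀ hN (hgap t ht.2))
  by_contra! hle
  have hmono : ∫ u in Iic (slopeMatch ψ₁ ψ₂ s), N u ≤ ∫ t in Iic s, N t :=
    setIntegral_mono_set hNint.integrableOn (ae_of_all _ fun t => (hN t).le)
      (Iic_subset_Iic.2 hle).eventuallyLE
  have hpos := setIntegral_pos_of_forall_pos hN hNint.integrableOn (S := Iic s) (by simp)
  nlinarith [h₂.const_pos hf hH₀ hN]

theorem legendreGap_nonneg_of_isLocalMin (hc : c₂ < c₁) {s : ℝ}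
    (hmin : IsLocalMin (legendreGap ψ₁ ψ₂) s) : 0 ≤ legendreGap ψ₁ ψ₂ s := by
  have p₁ := h₁.isConvexProfile hf hH₀ hN
  have p₂ := h₂.isConvexProfile hf hH₀ hN
  by_contra! hneg
  have hθs : slopeMatch ψ₁ ψ₂ s = s := by
    have := hmin.hasDerivAt_eq_zero (hasDerivAt_legendreGap p₁ p₂ s)
    linarith [(mul_eq_zero.1 this).resolve_left (p₁.deriv2_pos s).ne']
  have hθ' := hmin.le_one_of_hasDerivAt_mul_sub (hasDerivAt_legendreGap p₁ p₂) p₁.deriv2_pos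
    (hasDerivAt_slopeMatch p₁ p₂ s) hθs
  have hc₂ := h₂.const_pos hf hH₀ hN
  have hlt := h₁.mul_lt_of_legendreAt_lt h₂ hH hH₀ hc₂ (hN _) (p₁.deriv2_pos s)
    (p₂.deriv2_pos _) (deriv_slopeMatch p₁ p₂ s) (sub_neg.1 hneg)
  rw [hθs] at hlt hθ'
  have : c₁ * N s < c₂ * N s :=
    hlt.trans_le (mul_le_mul_of_nonneg_left (mul_le_of_le_one_right (hN s).le hθ') hc₂.le)
  linarith [lt_of_mul_lt_mul_right this (hN s).le]

theorem le_of_const_lt (hNcont : Continuous N) (hNint : Integrable N) (hc : c₂ < c₁) (s : ℝ) :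
    ψ₁ s ≤ ψ₂ s := by
  have p₁ := h₁.isConvexProfile hf hH₀ hN
  have p₂ := h₂.isConvexProfile hf hH₀ hN
  refine le_of_legendreGap_nonneg p₁ p₂ (nonneg_of_isLocalMin_nonneg
    (hasDerivAt_legendreGap p₁ p₂) (fun t ht => ?_) (fun t ht => ?_)
    (fun t => h₁.legendreGap_nonneg_of_isLocalMin h₂ hf hH hH₀ hN hc)) s
  · exact mul_pos (p₁.deriv2_pos t) (sub_pos.2
      (h₁.slopeMatch_lt_of_legendreGap_nonpos h₂ hf hH hH₀ hN hNcont hNint hc ht))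
  · exact mul_neg_of_pos_of_neg (p₁.deriv2_pos t) (sub_neg.2
      (h₁.lt_slopeMatch_of_legendreGap_nonpos h₂ hf hH hH₀ hN hNcont hNint hc ht))

end Comparison

end IsSolutionD

theorem IsSolutionD.const_le (h₁ : IsSolutionD f H N ψ₁ c₁) (h₂ : IsSolutionD f H N ψ₂ c₂)
    (hf : ∀ x ∈ Ioo (0 : ℝ) 1, 0 < f x) (hH : StrictMono (deriv H))
    (hH₀ : ∀ x, 0 < deriv H x) (hN : ∀ s, 0 < N s) (hNcont : Continuous N)
    (hNint : Integrable N) (hint₁ : Integrable fun z => ψ₁ z * N z)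
    (hint₂ : Integrable fun z => ψ₂ z * N z) (heq : ∫ z, ψ₁ z * N z = ∫ z, ψ₂ z * N z) :
    c₁ ≤ c₂ := by
  by_contra! hc
  have hψ : ψ₁ = ψ₂ := eq_of_le_of_integral_mul_eq
    (h₁.le_of_const_lt h₂ hf hH hH₀ hN hNcont hNint hc) h₁.contDiff.continuous
    h₂.contDiff.continuous hNcont hN hint₁ hint₂ heq
  subst hψ
  exact hc.ne' (h₁.const_eq h₂ (hN 0).ne')

theorem stmt15_general (fμ H : ℝ → ℝ) (ε : ℝ)
    (hε : 0 < ε)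
    (hfpos : ∀ x ∈ Set.Icc (0 : ℝ) 1, 0 < fμ x)
    (hH : ContDiff ℝ 2 H)
    (hHconv : StrictConvexOn ℝ Set.univ H)
    (hH'lb : ∀ x : ℝ, ε < deriv H x)
    (N : ℝ → ℝ) (hN : ∀ s, N s = Real.exp (-(s ^ 2) / 2) / Real.sqrt (2 * Real.pi))
    (ψ₁ ψ₂ : ℝ → ℝ) (c₁ c₂ : ℝ)
    (hψ₁C2 : ContDiff ℝ 2 ψ₁)
    (heq₁ : ∀ s : ℝ,
      fμ (deriv ψ₁ s) * deriv (deriv ψ₁) s * deriv H (s * deriv ψ₁ s - ψ₁ s) = c₁ * N s)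
    (hbot₁ : Tendsto (deriv ψ₁) atBot (nhds 0))
    (htop₁ : Tendsto (deriv ψ₁) atTop (nhds 1))
    (hint₁ : Integrable (fun z => ψ₁ z * N z))
    (hzero₁ : (∫ z, ψ₁ z * N z) = 0)
    (hψ₂C2 : ContDiff ℝ 2 ψ₂)
    (heq₂ : ∀ s : ℝ,
      fμ (deriv ψ₂ s) * deriv (deriv ψ₂) s * deriv H (s * deriv ψ₂ s - ψ₂ s) = c₂ * N s)
    (hbot₂ : Tendsto (deriv ψ₂) atBot (nhds 0))
    (htop₂ : Tendsto (deriv ψ₂) atTop (nhds 1))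
    (hint₂ : Integrable (fun z => ψ₂ z * N z))
    (hzero₂ : (∫ z, ψ₂ z * N z) = 0) :
    c₁ = c₂ := by
  obtain rfl : N = gaussianPDFReal 0 1 := funext fun s => by
    rw [hN, gaussianPDFReal]
    simp only [NNReal.coe_one, mul_one, sub_zero]
    ring
  have hNpos s := gaussianPDFReal_pos 0 1 s one_ne_zero
  have hNcont : Continuous (gaussianPDFReal 0 1) := by
    unfold gaussianPDFReal
    fun_prop
  have hNint := integrable_gaussianPDFReal 0 1
  have hH' : StrictMono (deriv H) := strictMonoOn_univ.1
    (hHconv.strictMonoOn_deriv fun x _ => (hH.differentiable (by norm_num)).differentiableAt)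
  have hH₀ x : 0 < deriv H x := hε.trans (hH'lb x)
  have hf x (hx : x ∈ Ioo (0 : ℝ) 1) : 0 < fμ x := hfpos x (Ioo_subset_Icc_self hx)
  have h₁ : IsSolutionD fμ H _ ψ₁ c₁ := ⟨hψ₁C2, heq₁, hbot₁, htop₁⟩
  have h₂ : IsSolutionD fμ H _ ψ₂ c₂ := ⟨hψ₂C2, heq₂, hbot₂, htop₂⟩
  exact le_antisymm
    (h₁.const_le h₂ hf hH' hH₀ hNpos hNcont hNint hint₁ hint₂ (hzero₁.trans hzero₂.symm))
    (h₂.const_le h₁ hf hH' hH₀ hNpos hNcont hNint hint₂ hint₁ (hzero₂.trans hzero₁.symm))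

/-- If `(ψ₁,c₁)` and `(ψ₂,c₂)` both solve the differential
system (D), then `c₁ = c₂`. -/
theorem stmt15 (fμ H : ℝ → ℝ) (ε K : ℝ)
    (hε : 0 < ε) (hεK : ε < K)
    (hfC1 : ContDiffOn ℝ 1 fμ (Set.Icc 0 1))
    (hfpos : ∀ x ∈ Set.Icc (0 : ℝ) 1, 0 < fμ x)
    (hH : ContDiff ℝ 2 H)
    (hHconv : StrictConvexOn ℝ Set.univ H)
    (hH'lb : ∀ x : ℝ, ε < deriv H x) (hH'ub : ∀ x : ℝ, deriv H x < K)
    (N : ℝ → ℝ) (hN : ∀ s, N s = Real.exp (-(s ^ 2) / 2) / Real.sqrt (2 * Real.pi))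
    (ψ₁ ψ₂ : ℝ → ℝ) (c₁ c₂ : ℝ)
    (hψ₁C2 : ContDiff ℝ 2 ψ₁)
    (heq₁ : ∀ s : ℝ,
      fμ (deriv ψ₁ s) * deriv (deriv ψ₁) s * deriv H (s * deriv ψ₁ s - ψ₁ s) = c₁ * N s)
    (hbot₁ : Tendsto (deriv ψ₁) atBot (nhds 0))
    (htop₁ : Tendsto (deriv ψ₁) atTop (nhds 1))
    (hint₁ : Integrable (fun z => ψ₁ z * N z))
    (hzero₁ : (∫ z, ψ₁ z * N z) = 0)
    (hψ₂C2 : ContDiff ℝ 2 ψ₂)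
    (heq₂ : ∀ s : ℝ,
      fμ (deriv ψ₂ s) * deriv (deriv ψ₂) s * deriv H (s * deriv ψ₂ s - ψ₂ s) = c₂ * N s)
    (hbot₂ : Tendsto (deriv ψ₂) atBot (nhds 0))
    (htop₂ : Tendsto (deriv ψ₂) atTop (nhds 1))
    (hint₂ : Integrable (fun z => ψ₂ z * N z))
    (hzero₂ : (∫ z, ψ₂ z * N z) = 0) :
    c₁ = c₂ :=
  stmt15_general fμ H ε hε hfpos hH hHconv hH'lb N hN ψ₁ ψ₂ c₁ c₂ hψ₁C2 heq₁ hbot₁ htop₁ hint₁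
    hzero₁ hψ₂C2 heq₂ hbot₂ htop₂ hint₂ hzero₂
end

section
/- Let (ψ₁,c₁) and (ψ₂,c₂) be solutions of the differential system (D) with c₁ ≥ c₂, and set θ := ψ₁ − ψ₂. Then for every s₀ ∈ ℝ with θ(s₀) = 0 one also has θ'(s₀) = 0 and θ''(s₀) = 0. -/
/-!
Since `ψ'` increases from `0` to `1`, a solution can be rewritten in the Legendre variable
`v = ψ'(s)`: with `i = (ψ')⁻¹` and `U = ψ*` the Legendre transform, `U' = i` and (D) reads
`c · (Φ ∘ i)' = f · H'(U)` where `Φ' = N`. If `ψ₂(t) ≤ ψ₁(t)` but `ψ₂'(t) < ψ₁'(t)`, then at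
`v = ψ₁'(t)` both `i₁ < i₂` and `U₁ < U₂`, and a first-crossing argument keeps `U₁ < U₂` up to
`v = 1`. Hence `c₁ Φ(i₁) - c₂ Φ(i₂)` decreases on `[v, 1)`, which is incompatible with its limit
`(c₁ - c₂) Φ(∞)` as `i₁, i₂ → ∞`. The symmetry `s ↦ -s`, `ψ' ↦ 1 - ψ'` of (D) excludes
`ψ₂'(t) > ψ₁'(t)`, so `θ ≥ 0` forces `θ' = 0`. At a zero of `θ`, (D) then gives `θ'' ≥ 0` because
`c₁ ≥ c₂`, while `θ'' > 0` would produce points with `θ > 0` and `θ' > 0`.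
-/

open MeasureTheory Filter Set Topology

section Calculus

variable {g g' : ℝ → ℝ} {x : ℝ}

theorem eventually_nhdsGT_pos_of_hasDerivAt {d : ℝ} (hd : HasDerivAt g d x) (hx : g x = 0)
    (hpos : 0 < d) : ∀ᶠ y in 𝓝[>] x, 0 < g y := by
  filter_upwards [(hasDerivAt_iff_tendsto_slope_left_right.1 hd).2.eventually (lt_mem_nhds hpos),
    self_mem_nhdsWithin] with y hslope hy
  rw [slope_def_field, hx, sub_zero] at hslope
  exact (div_pos_iff_of_pos_right (sub_pos.2 hy)).1 hslope

theorem eventually_nhdsLT_pos_of_hasDerivAt {d : ℝ} (hd : HasDerivAt g d x) (hx : g x = 0)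
    (hneg : d < 0) : ∀ᶠ y in 𝓝[<] x, 0 < g y := by
  filter_upwards [(hasDerivAt_iff_tendsto_slope_left_right.1 hd).1.eventually (gt_mem_nhds hneg),
    self_mem_nhdsWithin] with y hslope hy
  rw [slope_def_field, hx, sub_zero] at hslope
  simpa using (div_lt_iff_of_neg (sub_neg.2 hy)).1 hslope

theorem neg_on_Ico_of_deriv_neg_at_first_zero {a b : ℝ}
    (hg : ∀ x ∈ Ico a b, HasDerivAt g (g' x) x) (ha : g a < 0)
    (hzero : ∀ x ∈ Ioo a b, g x = 0 → (∀ y ∈ Ico a x, g y < 0) → g' x < 0) :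
    ∀ x ∈ Ico a b, g x < 0 := by
  by_contra! ⟨x₁, hx₁, hgx₁⟩
  have hcont : ContinuousOn g (Icc a x₁) := fun y hy =>
    (hg y ⟨hy.1, hy.2.trans_lt hx₁.2⟩).continuousAt.continuousWithinAt
  set S := Icc a x₁ ∩ g ⁻¹' Ici 0
  have hS : IsClosed S := hcont.preimage_isClosed_of_isClosed isClosed_Icc isClosed_Ici
  have hbdd : BddBelow S := ⟨a, fun y hy => hy.1.1⟩
  have hω : sInf S ∈ S := hS.csInf_mem ⟨x₁, ⟨hx₁.1, le_rfl⟩, hgx₁⟩ hbdd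
  set ω := sInf S
  have hbefore : ∀ y ∈ Ico a ω, g y < 0 := fun y hy => by
    by_contra! hgy
    exact (csInf_le hbdd ⟨⟨hy.1, hy.2.le.trans hω.1.2⟩, hgy⟩).not_gt hy.2
  have haω : a < ω := hω.1.1.lt_of_ne fun h => (h ▸ hω.2 : 0 ≤ g a).not_gt ha
  have hωb : ω < b := hω.1.2.trans_lt hx₁.2
  have hgω : g ω = 0 := by
    have hleft : Tendsto g (𝓝[<] ω) (𝓝 (g ω)) :=
      (hg ω ⟨haω.le, hωb⟩).continuousAt.continuousWithinAt
    refine le_antisymm (le_of_tendsto hleft ?_) hω.2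
    filter_upwards [Ioo_mem_nhdsLT haω] with y hy using (hbefore y ⟨hy.1.le, hy.2⟩).le
  obtain ⟨y, hpos, hy⟩ := ((eventually_nhdsLT_pos_of_hasDerivAt (hg ω ⟨haω.le, hωb⟩) hgω
    (hzero ω ⟨haω, hωb⟩ hgω hbefore)).and (Ioo_mem_nhdsLT haω)).exists
  exact (hbefore y ⟨hy.1.le, hy.2⟩).not_gt hpos

theorem Convex.antitoneOn_of_hasDerivAt_nonpos {s : Set ℝ} (hs : Convex ℝ s)
    (hd : ∀ x ∈ s, HasDerivAt g (g' x) x) (hnonpos : ∀ x ∈ interior s, g' x ≤ 0) :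
    AntitoneOn g s :=
  antitoneOn_of_hasDerivWithinAt_nonpos hs (HasDerivAt.continuousOn hd)
    (fun x hx => (hd x (interior_subset hx)).hasDerivWithinAt) hnonpos

theorem sub_lt_mul_sub_of_strictMono_deriv (hg : ∀ x, HasDerivAt g (g' x) x)
    (hmono : StrictMono g') {a b : ℝ} (hab : a < b) : g b - g a < g' b * (b - a) := by
  obtain ⟨ξ, hξ, hslope⟩ := exists_hasDerivAt_eq_slope g g' hab
    (HasDerivAt.continuousOn fun x _ => hg x) fun x _ => hg x
  rw [← div_lt_iff₀ (sub_pos.2 hab), ← hslope]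
  exact hmono hξ.2

theorem exists_lt_and_deriv_pos_of_deriv_eq_zero {g'' x₀ : ℝ}
    (hg : ∀ x, HasDerivAt g (g' x) x) (hg' : HasDerivAt g' g'' x₀) (h0 : g' x₀ = 0)
    (hpos : 0 < g'') : ∃ t, g x₀ < g t ∧ 0 < g' t := by
  obtain ⟨u, hu, hsub⟩ := mem_nhdsGT_iff_exists_Ioo_subset.1
    (eventually_nhdsGT_pos_of_hasDerivAt hg' h0 hpos)
  have ht : (x₀ + u) / 2 ∈ Ioo x₀ u := ⟨by linarith [mem_Ioi.1 hu], by linarith [mem_Ioi.1 hu]⟩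
  obtain ⟨ξ, hξ, hslope⟩ := exists_hasDerivAt_eq_slope g g' ht.1
    (HasDerivAt.continuousOn fun x _ => hg x) fun x _ => hg x
  have hξpos : 0 < g' ξ := hsub ⟨hξ.1, hξ.2.trans ht.2⟩
  rw [hslope, div_pos_iff_of_pos_right (sub_pos.2 ht.1), sub_pos] at hξpos
  exact ⟨_, hξpos, hsub ht⟩

end Calculus

section Inverse

variable {g : ℝ → ℝ} {l u v : ℝ}

theorem StrictMono.mem_Ioo_of_tendsto (hm : StrictMono g) (hl : Tendsto g atBot (𝓝 l))
    (hu : Tendsto g atTop (𝓝 u)) (s : ℝ) : g s ∈ Ioo l u :=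
  ⟨(le_of_tendsto hl (eventually_atBot.2 ⟨s - 1, fun _ ht => hm.monotone ht⟩)).trans_lt
      (hm (by linarith)),
    (hm (by linarith : s < s + 1)).trans_le
      (ge_of_tendsto hu (eventually_atTop.2 ⟨s + 1, fun _ ht => hm.monotone ht⟩))⟩

theorem apply_invFun_of_tendsto (hc : Continuous g) (hl : Tendsto g atBot (𝓝 l))
    (hu : Tendsto g atTop (𝓝 u)) (hv : v ∈ Ioo l u) : g (Function.invFun g v) = v :=
  Function.invFun_eq <| mem_range_of_exists_le_of_exists_ge hc
    ((hl.eventually (gt_mem_nhds hv.1)).exists.imp fun _ => le_of_lt)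
    ((hu.eventually (lt_mem_nhds hv.2)).exists.imp fun _ => le_of_lt)

theorem StrictMono.monotoneOn_invFun (hm : StrictMono g) (hc : Continuous g)
    (hl : Tendsto g atBot (𝓝 l)) (hu : Tendsto g atTop (𝓝 u)) :
    MonotoneOn (Function.invFun g) (Ioo l u) := fun x hx y hy hxy => by
  rwa [← hm.le_iff_le, apply_invFun_of_tendsto hc hl hu hx, apply_invFun_of_tendsto hc hl hu hy]

theorem StrictMono.continuousAt_invFun_s16 (hm : StrictMono g) (hc : Continuous g)
    (hl : Tendsto g atBot (𝓝 l)) (hu : Tendsto g atTop (𝓝 u)) (hv : v ∈ Ioo l u) :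
    ContinuousAt (Function.invFun g) v := by
  refine continuousAt_of_monotoneOn_of_image_mem_nhds (hm.monotoneOn_invFun hc hl hu)
    (Ioo_mem_nhds hv.1 hv.2) (Filter.mem_of_superset univ_mem fun s _ => ?_)
  exact ⟨g s, hm.mem_Ioo_of_tendsto hl hu s, Function.leftInverse_invFun hm.injective s⟩

theorem StrictMono.hasDerivAt_invFun {g' : ℝ → ℝ} (hm : StrictMono g)
    (hd : ∀ s, HasDerivAt g (g' s) s) (hl : Tendsto g atBot (𝓝 l)) (hu : Tendsto g atTop (𝓝 u))
    (hv : v ∈ Ioo l u) (hne : g' (Function.invFun g v) ≠ 0) :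
    HasDerivAt (Function.invFun g) (g' (Function.invFun g v))⁻¹ v :=
  have hc : Continuous g := continuous_iff_continuousAt.2 fun s => (hd s).continuousAt
  .of_local_left_inverse (hm.continuousAt_invFun_s16 hc hl hu hv) (hd _) hne <| by
    filter_upwards [Ioo_mem_nhds hv.1 hv.2] with y hy using apply_invFun_of_tendsto hc hl hu hy

theorem StrictMono.tendsto_invFun_nhdsLT (hm : StrictMono g) (hc : Continuous g)
    (hl : Tendsto g atBot (𝓝 l)) (hu : Tendsto g atTop (𝓝 u)) :
    Tendsto (Function.invFun g) (𝓝[<] u) atTop := by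
  refine Filter.tendsto_atTop.2 fun M => ?_
  have hM := hm.mem_Ioo_of_tendsto hl hu M
  filter_upwards [Ioo_mem_nhdsLT hM.2] with y hy
  rw [← hm.le_iff_le, apply_invFun_of_tendsto hc hl hu ⟨hM.1.trans hy.1, hy.2⟩]
  exact hy.1.le

end Inverse

section Comparison

variable {f G N i₁ i₂ j₁ j₂ U₁ U₂ : ℝ → ℝ} {c₁ c₂ w e : ℝ}

theorem lt_of_legendre_ode_lt (hG : StrictMono G) (hN : ∀ s, 0 < N s)
    (hf : ∀ v ∈ Ico w e, 0 < f v) (hc₁ : 0 < c₁) (hc : c₂ ≤ c₁)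
    (hi₁ : ∀ v ∈ Ico w e, HasDerivAt i₁ (j₁ v) v) (hi₂ : ∀ v ∈ Ico w e, HasDerivAt i₂ (j₂ v) v)
    (hj₂ : ∀ v ∈ Ico w e, 0 ≤ j₂ v)
    (hU₁ : ∀ v ∈ Ico w e, HasDerivAt U₁ (i₁ v) v) (hU₂ : ∀ v ∈ Ico w e, HasDerivAt U₂ (i₂ v) v)
    (hode₁ : ∀ v ∈ Ico w e, c₁ * (N (i₁ v) * j₁ v) = f v * G (U₁ v))
    (hode₂ : ∀ v ∈ Ico w e, c₂ * (N (i₂ v) * j₂ v) = f v * G (U₂ v))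
    (hi : i₁ w < i₂ w) (hU : U₁ w < U₂ w) : ∀ v ∈ Ico w e, U₁ v < U₂ v := by
  have hgap : ∀ v ∈ Ico w e, (∀ y ∈ Ico w v, i₁ y < i₂ y) → U₁ v - U₂ v < 0 := by
    intro v hv hlt
    have hsub : Icc w v ⊆ Ico w e := Icc_subset_Ico_right hv.2
    have hanti : AntitoneOn (fun y => U₁ y - U₂ y) (Icc w v) :=
      (convex_Icc w v).antitoneOn_of_hasDerivAt_nonpos
        (fun y hy => (hU₁ y (hsub hy)).sub (hU₂ y (hsub hy))) fun y hy => by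
          rw [interior_Icc] at hy
          exact (sub_neg.2 (hlt y ⟨hy.1.le, hy.2⟩)).le
    linarith [hanti (left_mem_Icc.2 hv.1) (right_mem_Icc.2 hv.1) hv.1]
  have hi_lt : ∀ v ∈ Ico w e, i₁ v - i₂ v < 0 := by
    refine neg_on_Ico_of_deriv_neg_at_first_zero (g' := fun v => j₁ v - j₂ v)
      (fun v hv => (hi₁ v hv).sub (hi₂ v hv)) (sub_neg.2 hi) fun ω hω hzero hbefore => ?_
    have hω' : ω ∈ Ico w e := Ioo_subset_Ico_self hω
    have hσ : i₂ ω = i₁ ω := (sub_eq_zero.1 hzero).symm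
    have hGlt : G (U₁ ω) < G (U₂ ω) :=
      hG (sub_neg.1 (hgap ω hω' fun y hy => sub_neg.1 (hbefore y hy)))
    have hmul : c₁ * (N (i₁ ω) * j₁ ω) < c₁ * (N (i₁ ω) * j₂ ω) := calc
      c₁ * (N (i₁ ω) * j₁ ω) = f ω * G (U₁ ω) := hode₁ ω hω'
      _ < f ω * G (U₂ ω) := mul_lt_mul_of_pos_left hGlt (hf ω hω')
      _ = c₂ * (N (i₁ ω) * j₂ ω) := by rw [← hode₂ ω hω', hσ]
      _ ≤ c₁ * (N (i₁ ω) * j₂ ω) :=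
        mul_le_mul_of_nonneg_right hc (mul_nonneg (hN _).le (hj₂ ω hω'))
    exact sub_neg.2 (lt_of_mul_lt_mul_left (lt_of_mul_lt_mul_left hmul hc₁.le) (hN _).le)
  exact fun v hv => sub_neg.1 (hgap v hv fun y hy => sub_neg.1 (hi_lt y ⟨hy.1, hy.2.trans hv.2⟩))

theorem false_of_legendre_ode_lt {Φ : ℝ → ℝ} {L : ℝ} (hG : StrictMono G) (hN : ∀ s, 0 < N s)
    (hΦ : ∀ x, HasDerivAt Φ (N x) x) (hΦL : Tendsto Φ atTop (𝓝 L))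
    (hf : ∀ v ∈ Ico w e, 0 < f v) (hc₂ : 0 < c₂) (hc : c₂ ≤ c₁) (hwe : w < e)
    (hi₁ : ∀ v ∈ Ico w e, HasDerivAt i₁ (j₁ v) v) (hi₂ : ∀ v ∈ Ico w e, HasDerivAt i₂ (j₂ v) v)
    (hj₂ : ∀ v ∈ Ico w e, 0 ≤ j₂ v)
    (hU₁ : ∀ v ∈ Ico w e, HasDerivAt U₁ (i₁ v) v) (hU₂ : ∀ v ∈ Ico w e, HasDerivAt U₂ (i₂ v) v)
    (hode₁ : ∀ v ∈ Ico w e, c₁ * (N (i₁ v) * j₁ v) = f v * G (U₁ v))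
    (hode₂ : ∀ v ∈ Ico w e, c₂ * (N (i₂ v) * j₂ v) = f v * G (U₂ v))
    (htop₁ : Tendsto i₁ (𝓝[<] e) atTop) (htop₂ : Tendsto i₂ (𝓝[<] e) atTop)
    (hi : i₁ w < i₂ w) (hU : U₁ w < U₂ w) : False := by
  have hUlt := lt_of_legendre_ode_lt hG hN hf (hc₂.trans_le hc) hc hi₁ hi₂ hj₂ hU₁ hU₂ hode₁
    hode₂ hi hU
  set φ := fun v => c₁ * Φ (i₁ v) - c₂ * Φ (i₂ v)
  have hφ : ∀ v ∈ Ico w e, HasDerivAt φ (f v * (G (U₁ v) - G (U₂ v))) v := fun v hv => by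
    have h := (((hΦ _).comp v (hi₁ v hv)).const_mul c₁).sub
      (((hΦ _).comp v (hi₂ v hv)).const_mul c₂)
    rwa [hode₁ v hv, hode₂ v hv, ← mul_sub] at h
  have hanti : AntitoneOn φ (Ico w e) :=
    (convex_Ico w e).antitoneOn_of_hasDerivAt_nonpos hφ fun v hv => by
      rw [interior_Ico] at hv
      exact mul_nonpos_of_nonneg_of_nonpos (hf v (Ioo_subset_Ico_self hv)).le
        (sub_nonpos.2 (hG (hUlt v (Ioo_subset_Ico_self hv))).le)
  have hlim : Tendsto φ (𝓝[<] e) (𝓝 (c₁ * L - c₂ * L)) :=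
    ((hΦL.comp htop₁).const_mul c₁).sub ((hΦL.comp htop₂).const_mul c₂)
  have hle : c₁ * L - c₂ * L ≤ φ w := le_of_tendsto hlim <| by
    filter_upwards [Ioo_mem_nhdsLT hwe] with v hv
    exact hanti (left_mem_Ico.2 hwe) (Ioo_subset_Ico_self hv) hv.1.le
  have hΦmono : StrictMono Φ := strictMono_of_hasDerivAt_pos hΦ hN
  have hΦle : Φ (i₁ w) ≤ L := hΦmono.monotone.ge_of_tendsto hΦL _
  have h₁ : c₂ * Φ (i₁ w) < c₂ * Φ (i₂ w) := mul_lt_mul_of_pos_left (hΦmono hi) hc₂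
  have h₂ : (c₁ - c₂) * Φ (i₁ w) ≤ (c₁ - c₂) * L :=
    mul_le_mul_of_nonneg_left hΦle (sub_nonneg.2 hc)
  simp only [φ] at hle
  linarith

end Comparison

/-- Conditions (1)–(3) of the system (D), with `ψ'`, `ψ''` the derivatives of `ψ` and `G`
standing for `H'`. -/
structure SolvesD (f G N ψ ψ' ψ'' : ℝ → ℝ) (c : ℝ) : Prop where
  hasDerivAt : ∀ s, HasDerivAt ψ (ψ' s) s
  hasDerivAt_deriv : ∀ s, HasDerivAt ψ' (ψ'' s) s
  ode : ∀ s, f (ψ' s) * ψ'' s * G (s * ψ' s - ψ s) = c * N s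
  tendsto_atBot : Tendsto ψ' atBot (𝓝 0)
  tendsto_atTop : Tendsto ψ' atTop (𝓝 1)

/-- The Legendre transform `ψ*(v) = s v - ψ(s)` at `v = ψ'(s)` of a convex function `ψ`. -/
noncomputable def legendre (ψ ψ' : ℝ → ℝ) (v : ℝ) : ℝ :=
  Function.invFun ψ' v * v - ψ (Function.invFun ψ' v)

namespace SolvesD

variable {f G N ψ ψ' ψ'' : ℝ → ℝ} {c v : ℝ}

theorem continuous_deriv (h : SolvesD f G N ψ ψ' ψ'' c) : Continuous ψ' :=
  continuous_iff_continuousAt.2 fun s => (h.hasDerivAt_deriv s).continuousAt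

theorem apply_invFun (h : SolvesD f G N ψ ψ' ψ'' c) (hv : v ∈ Ioo 0 1) :
    ψ' (Function.invFun ψ' v) = v :=
  apply_invFun_of_tendsto h.continuous_deriv h.tendsto_atBot h.tendsto_atTop hv

theorem const_ne_zero (h : SolvesD f G N ψ ψ' ψ'' c) (hf : ∀ x ∈ Ioo 0 1, 0 < f x)
    (hG : ∀ x, 0 < G x) : c ≠ 0 := by
  intro hc
  have hflat : ∀ s, ψ' s ∈ Ioo 0 1 → ψ'' s = 0 := fun s hs => by
    have hode := h.ode s
    rw [hc, zero_mul, mul_eq_zero, mul_eq_zero] at hode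
    exact (hode.resolve_right (hG _).ne').resolve_left (hf _ hs).ne'
  -- With `c = 0`, `ψ'` is locally constant wherever it lies in `(0, 1)`.
  have hclopen : IsClopen {s | ψ' s = 1 / 2} := by
    refine ⟨isClosed_eq h.continuous_deriv continuous_const, isOpen_iff_mem_nhds.2 fun s hs => ?_⟩
    have hopen : IsOpen (ψ' ⁻¹' Ioo 0 1) := isOpen_Ioo.preimage h.continuous_deriv
    obtain ⟨r, hr, hball⟩ := Metric.isOpen_iff.1 hopen s
      (by rw [mem_preimage, show ψ' s = 1 / 2 from hs]; norm_num)
    filter_upwards [Metric.ball_mem_nhds s hr] with t ht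
    refine (Metric.isOpen_ball.is_const_of_deriv_eq_zero (convex_ball s r).isPreconnected
      (fun x _ => (h.hasDerivAt_deriv x).differentiableAt.differentiableWithinAt)
      (fun x hx => ?_) ht (Metric.mem_ball_self hr)).trans hs
    rw [(h.hasDerivAt_deriv x).deriv]
    exact hflat x (hball hx)
  have hhalf : ∀ s, ψ' s = 1 / 2 := eq_univ_iff_forall.1 <|
    hclopen.eq_univ ⟨_, h.apply_invFun (v := 1 / 2) ⟨by norm_num, by norm_num⟩⟩
  have := tendsto_nhds_unique tendsto_const_nhds (h.tendsto_atTop.congr hhalf)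
  norm_num at this

theorem deriv_deriv_pos (h : SolvesD f G N ψ ψ' ψ'' c) (hf : ∀ x ∈ Ioo 0 1, 0 < f x)
    (hG : ∀ x, 0 < G x) (hN : ∀ s, 0 < N s) (s : ℝ) : 0 < ψ'' s := by
  have hne : ∀ s ∈ univ, ψ'' s ≠ 0 := fun s _ h0 => by
    have hode := h.ode s
    rw [h0, mul_zero, zero_mul] at hode
    exact mul_ne_zero (h.const_ne_zero hf hG) (hN s).ne' hode.symm
  -- Darboux: `ψ''` has a constant sign, and it cannot be negative since `ψ'` increases from 0 to 1.
  refine (hasDerivWithinAt_forall_lt_or_forall_gt_of_forall_ne convex_univ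
    (fun s _ => (h.hasDerivAt_deriv s).hasDerivWithinAt) hne).resolve_left (fun hneg => ?_) s
    (mem_univ s)
  have hanti := strictAnti_of_hasDerivAt_neg h.hasDerivAt_deriv fun s => hneg s (mem_univ s)
  have h₀ : ψ' 0 ≤ 0 :=
    ge_of_tendsto h.tendsto_atBot (eventually_atBot.2 ⟨0, fun _ ht => hanti.antitone ht⟩)
  have h₁ : 1 ≤ ψ' 0 :=
    le_of_tendsto h.tendsto_atTop (eventually_atTop.2 ⟨0, fun _ ht => hanti.antitone ht⟩)
  linarith

theorem strictMono_deriv (h : SolvesD f G N ψ ψ' ψ'' c) (hf : ∀ x ∈ Ioo 0 1, 0 < f x)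
    (hG : ∀ x, 0 < G x) (hN : ∀ s, 0 < N s) : StrictMono ψ' :=
  strictMono_of_hasDerivAt_pos h.hasDerivAt_deriv (h.deriv_deriv_pos hf hG hN)

theorem deriv_mem_Ioo (h : SolvesD f G N ψ ψ' ψ'' c) (hf : ∀ x ∈ Ioo 0 1, 0 < f x)
    (hG : ∀ x, 0 < G x) (hN : ∀ s, 0 < N s) (s : ℝ) : ψ' s ∈ Ioo 0 1 :=
  (h.strictMono_deriv hf hG hN).mem_Ioo_of_tendsto h.tendsto_atBot h.tendsto_atTop s

theorem const_pos (h : SolvesD f G N ψ ψ' ψ'' c) (hf : ∀ x ∈ Ioo 0 1, 0 < f x)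
    (hG : ∀ x, 0 < G x) (hN : ∀ s, 0 < N s) : 0 < c := by
  refine pos_of_mul_pos_left ?_ (hN 0).le
  rw [← h.ode 0]
  exact mul_pos (mul_pos (hf _ (h.deriv_mem_Ioo hf hG hN 0)) (h.deriv_deriv_pos hf hG hN 0)) (hG _)

theorem reflect (h : SolvesD f G N ψ ψ' ψ'' c) (hN : ∀ s, N (-s) = N s) :
    SolvesD (fun x => f (1 - x)) G N (fun s => ψ (-s) + s) (fun s => 1 - ψ' (-s))
      (fun s => ψ'' (-s)) c where
  hasDerivAt s :=
    (((h.hasDerivAt (-s)).comp s (hasDerivAt_neg s)).add (hasDerivAt_id s)).congr_deriv (by ring)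
  hasDerivAt_deriv s :=
    (((h.hasDerivAt_deriv (-s)).comp s (hasDerivAt_neg s)).const_sub 1).congr_deriv (by ring)
  ode s := by
    rw [sub_sub_cancel, ← hN, ← h.ode (-s)]
    congr 2
    ring
  tendsto_atBot := by
    simpa using (h.tendsto_atTop.comp tendsto_neg_atBot_atTop).const_sub 1
  tendsto_atTop := by
    simpa using (h.tendsto_atBot.comp tendsto_neg_atTop_atBot).const_sub 1

theorem hasDerivAt_invFun (h : SolvesD f G N ψ ψ' ψ'' c) (hf : ∀ x ∈ Ioo 0 1, 0 < f x)
    (hG : ∀ x, 0 < G x) (hN : ∀ s, 0 < N s) (hv : v ∈ Ioo 0 1) :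
    HasDerivAt (Function.invFun ψ') (ψ'' (Function.invFun ψ' v))⁻¹ v :=
  (h.strictMono_deriv hf hG hN).hasDerivAt_invFun h.hasDerivAt_deriv h.tendsto_atBot
    h.tendsto_atTop hv (h.deriv_deriv_pos hf hG hN _).ne'

theorem tendsto_invFun (h : SolvesD f G N ψ ψ' ψ'' c) (hf : ∀ x ∈ Ioo 0 1, 0 < f x)
    (hG : ∀ x, 0 < G x) (hN : ∀ s, 0 < N s) : Tendsto (Function.invFun ψ') (𝓝[<] 1) atTop :=
  (h.strictMono_deriv hf hG hN).tendsto_invFun_nhdsLT h.continuous_deriv h.tendsto_atBot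
    h.tendsto_atTop

theorem hasDerivAt_legendre (h : SolvesD f G N ψ ψ' ψ'' c) (hf : ∀ x ∈ Ioo 0 1, 0 < f x)
    (hG : ∀ x, 0 < G x) (hN : ∀ s, 0 < N s) (hv : v ∈ Ioo 0 1) :
    HasDerivAt (legendre ψ ψ') (Function.invFun ψ' v) v := by
  have hi := h.hasDerivAt_invFun hf hG hN hv
  refine ((hi.mul (hasDerivAt_id v)).sub ((h.hasDerivAt _).comp v hi)).congr_deriv ?_
  rw [h.apply_invFun hv, id]
  ring

theorem ode_legendre (h : SolvesD f G N ψ ψ' ψ'' c) (hf : ∀ x ∈ Ioo 0 1, 0 < f x)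
    (hG : ∀ x, 0 < G x) (hN : ∀ s, 0 < N s) (hv : v ∈ Ioo 0 1) :
    c * (N (Function.invFun ψ' v) * (ψ'' (Function.invFun ψ' v))⁻¹) =
      f v * G (legendre ψ ψ' v) := by
  have hode := h.ode (Function.invFun ψ' v)
  rw [h.apply_invFun hv] at hode
  have hne := (h.deriv_deriv_pos hf hG hN (Function.invFun ψ' v)).ne'
  rw [← mul_assoc, ← hode, legendre]
  field_simp

section TwoSolutions

variable {ψ₁ ψ₁' ψ₁'' ψ₂ ψ₂' ψ₂'' Φ : ℝ → ℝ} {c₁ c₂ L t : ℝ}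

theorem not_deriv_lt_of_le (h₁ : SolvesD f G N ψ₁ ψ₁' ψ₁'' c₁)
    (h₂ : SolvesD f G N ψ₂ ψ₂' ψ₂'' c₂) (hf : ∀ x ∈ Ioo 0 1, 0 < f x) (hG : ∀ x, 0 < G x)
    (hGm : StrictMono G) (hN : ∀ s, 0 < N s) (hΦ : ∀ x, HasDerivAt Φ (N x) x)
    (hΦL : Tendsto Φ atTop (𝓝 L)) (hc : c₂ ≤ c₁) (ht : ψ₂ t ≤ ψ₁ t) : ¬ ψ₂' t < ψ₁' t := by
  intro hlt
  set w := ψ₁' t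
  have hw : w ∈ Ioo 0 1 := h₁.deriv_mem_Ioo hf hG hN t
  have hsub : Ico w 1 ⊆ Ioo 0 1 := fun v hv => ⟨hw.1.trans_le hv.1, hv.2⟩
  have hm₂ := h₂.strictMono_deriv hf hG hN
  set b := Function.invFun ψ₂' w
  have hb : ψ₂' b = w := h₂.apply_invFun hw
  have ha : Function.invFun ψ₁' w = t :=
    Function.leftInverse_invFun (h₁.strictMono_deriv hf hG hN).injective t
  have htb : t < b := hm₂.lt_iff_lt.1 (hb ▸ hlt)
  have hconv := sub_lt_mul_sub_of_strictMono_deriv h₂.hasDerivAt hm₂ htb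
  rw [hb] at hconv
  refine false_of_legendre_ode_lt hGm hN hΦ hΦL (fun v hv => hf v (hsub hv))
    (h₂.const_pos hf hG hN) hc hw.2 (fun v hv => h₁.hasDerivAt_invFun hf hG hN (hsub hv))
    (fun v hv => h₂.hasDerivAt_invFun hf hG hN (hsub hv))
    (fun v _ => (inv_pos.2 (h₂.deriv_deriv_pos hf hG hN _)).le)
    (fun v hv => h₁.hasDerivAt_legendre hf hG hN (hsub hv))
    (fun v hv => h₂.hasDerivAt_legendre hf hG hN (hsub hv))
    (fun v hv => h₁.ode_legendre hf hG hN (hsub hv))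
    (fun v hv => h₂.ode_legendre hf hG hN (hsub hv))
    (h₁.tendsto_invFun hf hG hN) (h₂.tendsto_invFun hf hG hN) (ha ▸ htb) ?_
  rw [legendre, legendre, ha]
  linarith [show w * (b - t) = b * w - t * w by ring]

theorem deriv_eq_of_le (h₁ : SolvesD f G N ψ₁ ψ₁' ψ₁'' c₁)
    (h₂ : SolvesD f G N ψ₂ ψ₂' ψ₂'' c₂) (hf : ∀ x ∈ Ioo 0 1, 0 < f x) (hG : ∀ x, 0 < G x)
    (hGm : StrictMono G) (hN : ∀ s, 0 < N s) (hNeven : ∀ s, N (-s) = N s)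
    (hΦ : ∀ x, HasDerivAt Φ (N x) x) (hΦL : Tendsto Φ atTop (𝓝 L)) (hc : c₂ ≤ c₁)
    (ht : ψ₂ t ≤ ψ₁ t) : ψ₁' t = ψ₂' t := by
  rcases lt_trichotomy (ψ₁' t) (ψ₂' t) with hlt | heq | hgt
  · have hf' : ∀ x ∈ Ioo 0 1, 0 < f (1 - x) := fun x hx =>
      hf _ ⟨sub_pos.2 hx.2, sub_lt_self 1 hx.1⟩
    refine absurd ?_ (not_deriv_lt_of_le (h₁.reflect hNeven) (h₂.reflect hNeven) hf' hG hGm hN hΦ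
      hΦL hc (t := -t) (by simpa using ht))
    simpa using hlt
  · exact heq
  · exact absurd hgt (not_deriv_lt_of_le h₁ h₂ hf hG hGm hN hΦ hΦL hc ht)

theorem deriv_eq_and_deriv_deriv_eq (h₁ : SolvesD f G N ψ₁ ψ₁' ψ₁'' c₁)
    (h₂ : SolvesD f G N ψ₂ ψ₂' ψ₂'' c₂) (hf : ∀ x ∈ Ioo 0 1, 0 < f x) (hG : ∀ x, 0 < G x)
    (hGm : StrictMono G) (hN : ∀ s, 0 < N s) (hNeven : ∀ s, N (-s) = N s)
    (hΦ : ∀ x, HasDerivAt Φ (N x) x) (hΦL : Tendsto Φ atTop (𝓝 L)) (hc : c₂ ≤ c₁)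
    (ht : ψ₁ t = ψ₂ t) : ψ₁' t = ψ₂' t ∧ ψ₁'' t = ψ₂'' t := by
  have h1 := deriv_eq_of_le h₁ h₂ hf hG hGm hN hNeven hΦ hΦL hc ht.ge
  refine ⟨h1, (le_of_not_gt fun hlt => ?_).antisymm ?_⟩
  · obtain ⟨s, hs, hs'⟩ := exists_lt_and_deriv_pos_of_deriv_eq_zero
      (fun s => (h₁.hasDerivAt s).sub (h₂.hasDerivAt s))
      ((h₁.hasDerivAt_deriv t).sub (h₂.hasDerivAt_deriv t)) (sub_eq_zero.2 h1) (sub_pos.2 hlt)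
    have hle : ψ₂ s ≤ ψ₁ s := by rw [Pi.sub_apply, Pi.sub_apply] at hs; linarith
    exact hs'.ne' (sub_eq_zero.2 (deriv_eq_of_le h₁ h₂ hf hG hGm hN hNeven hΦ hΦL hc hle))
  · have hpos : 0 < f (ψ₁' t) * G (t * ψ₁' t - ψ₁ t) :=
      mul_pos (hf _ (h₁.deriv_mem_Ioo hf hG hN t)) (hG _)
    have e₁ := h₁.ode t
    have e₂ := h₂.ode t
    rw [← h1, ← ht] at e₂
    refine le_of_mul_le_mul_left ?_ hpos
    nlinarith [mul_le_mul_of_nonneg_right hc (hN t).le]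

end TwoSolutions

theorem of_contDiff (hψ : ContDiff ℝ 2 ψ)
    (hode : ∀ s, f (deriv ψ s) * deriv (deriv ψ) s * G (s * deriv ψ s - ψ s) = c * N s)
    (hbot : Tendsto (deriv ψ) atBot (𝓝 0)) (htop : Tendsto (deriv ψ) atTop (𝓝 1)) :
    SolvesD f G N ψ (deriv ψ) (deriv (deriv ψ)) c where
  hasDerivAt s := (hψ.differentiable (by norm_num) s).hasDerivAt
  hasDerivAt_deriv s := (hψ.differentiable_deriv_two s).hasDerivAt
  ode := hode
  tendsto_atBot := hbot
  tendsto_atTop := htop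

end SolvesD

theorem exists_hasDerivAt_tendsto_atTop {N : ℝ → ℝ} (hc : Continuous N)
    (hi : IntegrableOn N (Ioi 0)) :
    ∃ Φ L, (∀ x, HasDerivAt Φ (N x) x) ∧ Tendsto Φ atTop (𝓝 L) :=
  ⟨fun x => ∫ t in (0 : ℝ)..x, N t, _, fun x => (hc.integral_hasStrictDerivAt 0 x).hasDerivAt,
    intervalIntegral_tendsto_integral_Ioi 0 hi tendsto_id⟩

theorem integrable_exp_neg_sq_div_two_div_sqrt :
    Integrable fun s : ℝ => Real.exp (-(s ^ 2) / 2) / Real.sqrt (2 * Real.pi) := by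
  simpa [neg_div, div_eq_inv_mul] using
    (integrable_exp_neg_mul_sq (b := 1 / 2) (by norm_num)).div_const (Real.sqrt (2 * Real.pi))

theorem stmt16_general (fμ H : ℝ → ℝ) (ε : ℝ)
    (hε : 0 < ε)
    (hfpos : ∀ x ∈ Set.Icc (0 : ℝ) 1, 0 < fμ x)
    (hH : ContDiff ℝ 2 H)
    (hHconv : StrictConvexOn ℝ Set.univ H)
    (hH'lb : ∀ x : ℝ, ε < deriv H x)
    (N : ℝ → ℝ) (hN : ∀ s, N s = Real.exp (-(s ^ 2) / 2) / Real.sqrt (2 * Real.pi))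
    (ψ₁ ψ₂ : ℝ → ℝ) (c₁ c₂ : ℝ)
    (hψ₁C2 : ContDiff ℝ 2 ψ₁)
    (heq₁ : ∀ s : ℝ,
      fμ (deriv ψ₁ s) * deriv (deriv ψ₁) s * deriv H (s * deriv ψ₁ s - ψ₁ s) = c₁ * N s)
    (hbot₁ : Tendsto (deriv ψ₁) atBot (nhds 0))
    (htop₁ : Tendsto (deriv ψ₁) atTop (nhds 1))
    (hψ₂C2 : ContDiff ℝ 2 ψ₂)
    (heq₂ : ∀ s : ℝ,
      fμ (deriv ψ₂ s) * deriv (deriv ψ₂) s * deriv H (s * deriv ψ₂ s - ψ₂ s) = c₂ * N s)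
    (hbot₂ : Tendsto (deriv ψ₂) atBot (nhds 0))
    (htop₂ : Tendsto (deriv ψ₂) atTop (nhds 1))
    (hc : c₂ ≤ c₁)
    (θ : ℝ → ℝ) (hθ : θ = fun s => ψ₁ s - ψ₂ s) :
    ∀ s₀ : ℝ, θ s₀ = 0 → deriv θ s₀ = 0 ∧ deriv (deriv θ) s₀ = 0 := by
  intro s₀ hs₀
  subst hθ
  have hNfun : N = fun s => Real.exp (-(s ^ 2) / 2) / Real.sqrt (2 * Real.pi) := funext hN
  obtain ⟨Φ, L, hΦ, hΦL⟩ := exists_hasDerivAt_tendsto_atTop (N := N) (by rw [hNfun]; fun_prop)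
    (by rw [hNfun]; exact integrable_exp_neg_sq_div_two_div_sqrt.integrableOn)
  have hGm : StrictMono (deriv H) := strictMonoOn_univ.1 <|
    hHconv.strictMonoOn_deriv fun x _ => (hH.differentiable (by norm_num)).differentiableAt
  have h₁ := SolvesD.of_contDiff hψ₁C2 heq₁ hbot₁ htop₁
  have h₂ := SolvesD.of_contDiff hψ₂C2 heq₂ hbot₂ htop₂
  obtain ⟨hd, hdd⟩ := h₁.deriv_eq_and_deriv_deriv_eq h₂
    (fun x hx => hfpos x (Ioo_subset_Icc_self hx)) (fun x => hε.trans (hH'lb x)) hGm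
    (fun s => by rw [hN]; positivity) (fun s => by rw [hN, hN, neg_sq]) hΦ hΦL hc
    (sub_eq_zero.1 hs₀)
  have hderiv : deriv (fun s => ψ₁ s - ψ₂ s) = fun s => deriv ψ₁ s - deriv ψ₂ s :=
    funext fun s => ((h₁.hasDerivAt s).sub (h₂.hasDerivAt s)).deriv
  rw [hderiv]
  exact ⟨sub_eq_zero.2 hd,
    ((h₁.hasDerivAt_deriv s₀).sub (h₂.hasDerivAt_deriv s₀)).deriv.trans (sub_eq_zero.2 hdd)⟩

/-- If `(ψ₁,c₁)` and `(ψ₂,c₂)` solve the differential system (D)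
with `c₁ ≥ c₂` and `θ := ψ₁ − ψ₂`, then any zero `s₀` of `θ` satisfies
`θ'(s₀) = 0` and `θ''(s₀) = 0`. -/
theorem stmt16 (fμ H : ℝ → ℝ) (ε K : ℝ)
    (hε : 0 < ε) (hεK : ε < K)
    (hfC1 : ContDiffOn ℝ 1 fμ (Set.Icc 0 1))
    (hfpos : ∀ x ∈ Set.Icc (0 : ℝ) 1, 0 < fμ x)
    (hH : ContDiff ℝ 2 H)
    (hHconv : StrictConvexOn ℝ Set.univ H)
    (hH'lb : ∀ x : ℝ, ε < deriv H x) (hH'ub : ∀ x : ℝ, deriv H x < K)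
    (N : ℝ → ℝ) (hN : ∀ s, N s = Real.exp (-(s ^ 2) / 2) / Real.sqrt (2 * Real.pi))
    (ψ₁ ψ₂ : ℝ → ℝ) (c₁ c₂ : ℝ)
    (hψ₁C2 : ContDiff ℝ 2 ψ₁)
    (heq₁ : ∀ s : ℝ,
      fμ (deriv ψ₁ s) * deriv (deriv ψ₁) s * deriv H (s * deriv ψ₁ s - ψ₁ s) = c₁ * N s)
    (hbot₁ : Tendsto (deriv ψ₁) atBot (nhds 0))
    (htop₁ : Tendsto (deriv ψ₁) atTop (nhds 1))
    (hint₁ : Integrable (fun z => ψ₁ z * N z))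
    (hzero₁ : (∫ z, ψ₁ z * N z) = 0)
    (hψ₂C2 : ContDiff ℝ 2 ψ₂)
    (heq₂ : ∀ s : ℝ,
      fμ (deriv ψ₂ s) * deriv (deriv ψ₂) s * deriv H (s * deriv ψ₂ s - ψ₂ s) = c₂ * N s)
    (hbot₂ : Tendsto (deriv ψ₂) atBot (nhds 0))
    (htop₂ : Tendsto (deriv ψ₂) atTop (nhds 1))
    (hint₂ : Integrable (fun z => ψ₂ z * N z))
    (hzero₂ : (∫ z, ψ₂ z * N z) = 0)
    (hc : c₂ ≤ c₁)
    (θ : ℝ → ℝ) (hθ : θ = fun s => ψ₁ s - ψ₂ s) :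
    ∀ s₀ : ℝ, θ s₀ = 0 → deriv θ s₀ = 0 ∧ deriv (deriv θ) s₀ = 0 :=
  stmt16_general fμ H ε hε hfpos hH hHconv hH'lb N hN ψ₁ ψ₂ c₁ c₂ hψ₁C2 heq₁ hbot₁ htop₁ hψ₂C2 heq₂
    hbot₂ htop₂ hc θ hθ
end
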